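/- For any numerical semigroup S with Δ(S) nonempty, the infimum defining LD(S) is attained: there exists n ∈ S with |L(n)| ≥ 2 and LD(n) = LD(S). -/
import Mathlib


open Finset

namespace LengthDensity

/-- The set of factorizations of `n` with respect to generators `g`. -/
def facs {k : ℕ} (g : Fin k → ℕ) (n : ℕ) : Set (Fin k → ℕ) :=
  {z | ∑ i, z i * g i = n}

/-- Membership in the numerical semigroup generated by `g`. -/
def mem {k : ℕ} (g : Fin k → ℕ) (n : ℕ) : Prop := (facs g n).Nonempty

/-- The set of factorization lengths of `n`. -/
def lengthSet {k : ℕ} (g : Fin k → ℕ) (n : ℕ) : Set ℕ :=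
  (fun z => ∑ i, z i) '' facs g n

/-- Length density of an element. -/
noncomputable def LD {k : ℕ} (g : Fin k → ℕ) (n : ℕ) : ℝ :=
  (((lengthSet g n).ncard : ℝ) - 1) /
    (((sSup (lengthSet g n) : ℕ) : ℝ) - ((sInf (lengthSet g n) : ℕ) : ℝ))

/-- Length density of the semigroup: infimum of `LD` over elements with
non-singleton length set. -/
noncomputable def LDsgp {k : ℕ} (g : Fin k → ℕ) : ℝ :=
  sInf {x : ℝ | ∃ n : ℕ, 2 ≤ (lengthSet g n).ncard ∧ x = LD g n}

/-- The delta set (successive gaps) of a set of naturals. -/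
def deltaOf (L : Set ℕ) : Set ℕ :=
  {d | ∃ a ∈ L, ∃ b ∈ L, a < b ∧ (∀ c ∈ L, ¬(a < c ∧ c < b)) ∧ d = b - a}

/-- The delta set of an element. -/
def delta {k : ℕ} (g : Fin k → ℕ) (n : ℕ) : Set ℕ := deltaOf (lengthSet g n)

/-- The delta set of the semigroup. -/
def Delta {k : ℕ} (g : Fin k → ℕ) : Set ℕ := ⋃ n : ℕ, delta g n

/-- Adjacency in the factorization graph of `n`: two factorizations of `n`
sharing a positive coordinate. -/
def adj {k : ℕ} (g : Fin k → ℕ) (n : ℕ) (z z' : Fin k → ℕ) : Prop :=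
  z ∈ facs g n ∧ z' ∈ facs g n ∧ ∃ i, 0 < z i ∧ 0 < z' i

/-- `n` is a Betti element: its factorization graph is disconnected. -/
def IsBetti {k : ℕ} (g : Fin k → ℕ) (n : ℕ) : Prop :=
  ∃ z ∈ facs g n, ∃ z' ∈ facs g n, ¬ Relation.ReflTransGen (adj g n) z z'

/-- The semigroup is tasty: `LD(S) > 1 / max Δ(S)`. -/
def Tasty {k : ℕ} (g : Fin k → ℕ) : Prop := LDsgp g > 1 / ((sSup (Delta g) : ℕ) : ℝ)

/-- The semigroup is bland: `LD(S) = 1 / max Δ(S)`. -/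
def Bland {k : ℕ} (g : Fin k → ℕ) : Prop := LDsgp g = 1 / ((sSup (Delta g) : ℕ) : ℝ)

/-- `g` is a minimal generating set: no generator is a nonnegative integer
combination of the others. -/
def IsMinGen {k : ℕ} (g : Fin k → ℕ) : Prop :=
  ∀ i, ¬ ∃ z : Fin k → ℕ, z i = 0 ∧ ∑ j, z j * g j = g i

/-- `n` is a non-atom of the semigroup generated by `g`:
it is a sum of two nonzero elements. -/
def NonAtom {k : ℕ} (g : Fin k → ℕ) (n : ℕ) : Prop :=
  ∃ a b : ℕ, 0 < a ∧ 0 < b ∧ mem g a ∧ mem g b ∧ n = a + b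

section Foundation

variable {k : ℕ} {g : Fin k → ℕ}

lemma facs_finite (hpos : ∀ i, 0 < g i) (n : ℕ) : (facs g n).Finite := by
  apply Set.Finite.subset (Set.Finite.pi (fun i : Fin k => Set.finite_Iic n))
  intro z hz
  simp only [Set.mem_pi, Set.mem_univ, Set.mem_Iic, forall_true_left]
  intro i
  have h1 : z i * g i ≤ n := by
    rw [← hz]
    exact Finset.single_le_sum (f := fun j => z j * g j) (fun j _ => Nat.zero_le _) (mem_univ i)
  calc z i = z i * 1 := by ring
  _ ≤ z i * g i := Nat.mul_le_mul_left _ (hpos i)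
  _ ≤ n := h1

lemma lengthSet_finite (hpos : ∀ i, 0 < g i) (n : ℕ) : (lengthSet g n).Finite :=
  (facs_finite hpos n).image _

/-- notation shortcuts -/
noncomputable def lmin (g : Fin k → ℕ) (n : ℕ) : ℕ := sInf (lengthSet g n)
noncomputable def lmax (g : Fin k → ℕ) (n : ℕ) : ℕ := sSup (lengthSet g n)

lemma lengthSet_nonempty (hn : mem g n) : (lengthSet g n).Nonempty := hn.image _

lemma lmin_mem (hpos : ∀ i, 0 < g i) (hn : mem g n) : lmin g n ∈ lengthSet g n :=
  Nat.sInf_mem (lengthSet_nonempty hn)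

lemma lmax_mem (hpos : ∀ i, 0 < g i) (hn : mem g n) : lmax g n ∈ lengthSet g n :=
  Set.Nonempty.csSup_mem (lengthSet_nonempty hn) (lengthSet_finite hpos n)

lemma lmin_le (hpos : ∀ i, 0 < g i) (hl : l ∈ lengthSet g n) : lmin g n ≤ l :=
  Nat.sInf_le hl

lemma le_lmax (hpos : ∀ i, 0 < g i) (hl : l ∈ lengthSet g n) : l ≤ lmax g n :=
  le_csSup ((lengthSet_finite hpos n).bddAbove) hl

end Foundation

section Rep

variable {k : ℕ}

lemma bezout_finset (f : Fin k → ℕ) (s : Finset (Fin k)) :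
    ∃ c : Fin k → ℤ, ∑ i ∈ s, c i * f i = ((s.gcd f : ℕ) : ℤ) := by
  classical
  induction s using Finset.induction_on with
  | empty => exact ⟨0, by simp⟩
  | @insert a s ha ih =>
    obtain ⟨c, hc⟩ := ih
    refine ⟨fun i => if i = a then Nat.gcdA (f a) (s.gcd f) else c i * Nat.gcdB (f a) (s.gcd f), ?_⟩
    rw [Finset.sum_insert ha, Finset.gcd_insert]
    have hcongr : ∀ i ∈ s, (if i = a then Nat.gcdA (f a) (s.gcd f) else c i * Nat.gcdB (f a) (s.gcd f)) * (f i : ℤ)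
        = (c i * f i) * Nat.gcdB (f a) (s.gcd f) := by
      intro i hi
      have : i ≠ a := by rintro rfl; exact ha hi
      simp only [if_neg this]; ring
    rw [Finset.sum_congr rfl hcongr, ← Finset.sum_mul, hc]
    simp only [if_pos rfl]
    have hg : ((GCDMonoid.gcd (f a) (s.gcd f) : ℕ) : ℤ) = ((Nat.gcd (f a) (s.gcd f) : ℕ) : ℤ) := by
      norm_cast
    rw [hg, Nat.gcd_eq_gcd_ab]
    simp only [if_true, eq_self_iff_true]
    ring

lemma rep_all (f : Fin k → ℕ) :
    ∃ A : ℕ, ∀ m : ℕ, (Finset.univ.gcd f) ∣ m → A ≤ m →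
      ∃ w : Fin k → ℕ, ∑ i, w i * f i = m := by
  classical
  obtain ⟨c, hc⟩ := bezout_finset f Finset.univ
  set G := Finset.univ.gcd f with hG
  set wA : Fin k → ℕ := fun i => (-c i).toNat with hwA
  set wB : Fin k → ℕ := fun i => (c i).toNat with hwB
  set A : ℕ := ∑ i, wA i * f i with hA
  set B : ℕ := ∑ i, wB i * f i with hB
  have hBA : (B : ℤ) = (A : ℤ) + (G : ℤ) := by
    push_cast [hA, hB]
    rw [← hc, ← Finset.sum_add_distrib]
    apply Finset.sum_congr rfl
    intro i _
    have h1 : ((c i).toNat : ℤ) = ((-c i).toNat : ℤ) + c i := by omega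
    rw [h1]; ring
  have hBA' : B = A + G := by exact_mod_cast hBA
  have hGdvdA : G ∣ A := by
    apply Finset.dvd_sum
    intro i _
    exact Dvd.dvd.mul_left (Finset.gcd_dvd (Finset.mem_univ i)) _
  refine ⟨A * A, ?_⟩
  intro m hGm hAm
  by_cases hA0 : A = 0
  · rcases Nat.eq_zero_or_pos G with hG0 | hG0
    · refine ⟨0, ?_⟩
      simp only [Pi.zero_apply, zero_mul, Finset.sum_const_zero]
      rw [hG0] at hGm
      omega
    · refine ⟨fun i => (m / G) * wB i, ?_⟩
      have h2 : ∑ i, m / G * wB i * f i = (m / G) * B := by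
        rw [Finset.mul_sum]; apply Finset.sum_congr rfl; intro i _; ring
      rw [h2, hBA', hA0]
      simp only [Nat.zero_add]
      exact Nat.div_mul_cancel hGm
  · have hApos : 0 < A := Nat.pos_of_ne_zero hA0
    have hGpos : 0 < G := by
      rcases Nat.eq_zero_or_pos G with h0 | h0
      · exfalso; rw [h0] at hGdvdA; exact hA0 (Nat.eq_zero_of_zero_dvd hGdvdA)
      · exact h0
    set q := m / A with hq
    set r := m % A with hr
    have hqr : m = q * A + r := by rw [hq, hr, Nat.mul_comm]; exact (Nat.div_add_mod m A).symm
    have hrA : r < A := Nat.mod_lt _ hApos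
    have hGr : G ∣ r := by
      have h3 : G ∣ q * A := Dvd.dvd.mul_left hGdvdA q
      have h4 : r = m - q * A := by omega
      rw [h4]; exact Nat.dvd_sub hGm h3
    set s := r / G with hs
    have hsG : s * G = r := Nat.div_mul_cancel hGr
    have hsq : s ≤ q := by
      have h5 : s ≤ r := by
        calc s ≤ s * G := Nat.le_mul_of_pos_right s hGpos
        _ = r := hsG
      have h6 : A ≤ q := by
        rw [hq]
        exact Nat.le_div_iff_mul_le hApos |>.mpr (by nlinarith)
      omega
    refine ⟨fun i => (q - s) * wA i + s * wB i, ?_⟩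
    have h7 : ∑ i, ((q - s) * wA i + s * wB i) * f i = (q - s) * A + s * B := by
      rw [hA, hB, Finset.mul_sum, Finset.mul_sum, ← Finset.sum_add_distrib]
      apply Finset.sum_congr rfl
      intro i _
      ring
    rw [h7, hBA', Nat.mul_add]
    have h8 : (q - s) * A + s * A = q * A := by
      rw [← Nat.add_mul]
      congr 1
      omega
    omega

end Rep
section Structure

/-- gcd of the differences of generators to the minimal generator -/
def ee {k : ℕ} (g : Fin k → ℕ) (i0 : Fin k) : ℕ :=
  Finset.univ.gcd (fun i => g i - g i0)

variable {k : ℕ} {g : Fin k → ℕ} {i0 imax : Fin k} {n l : ℕ}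

lemma key_identity (hi0 : ∀ i, g i0 ≤ g i) (z : Fin k → ℕ) :
    ∑ i, z i * g i = g i0 * (∑ i, z i) + ∑ i, z i * (g i - g i0) := by
  rw [Finset.mul_sum, ← Finset.sum_add_distrib]
  apply Finset.sum_congr rfl
  intro i _
  have := hi0 i
  cases Nat.exists_eq_add_of_le this with
  | intro c hc => rw [hc, Nat.add_sub_cancel_left]; ring

lemma ee_dvd_h (i : Fin k) : ee g i0 ∣ g i - g i0 :=
  Finset.gcd_dvd (Finset.mem_univ i)

lemma ee_dvd_sum (z : Fin k → ℕ) : ee g i0 ∣ ∑ i, z i * (g i - g i0) :=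
  Finset.dvd_sum (fun i _ => Dvd.dvd.mul_left (ee_dvd_h i) _)

lemma sum_h_le (himax : ∀ i, g i ≤ g imax) (z : Fin k → ℕ) :
    ∑ i, z i * (g i - g i0) ≤ (g imax - g i0) * (∑ i, z i) := by
  rw [Finset.mul_sum]
  apply Finset.sum_le_sum
  intro i _
  have := himax i
  calc z i * (g i - g i0) ≤ z i * (g imax - g i0) := Nat.mul_le_mul_left _ (by omega)
  _ = (g imax - g i0) * z i := Nat.mul_comm _ _

/-- all lengths of n are congruent mod ee -/
lemma length_congr (hgcd : Finset.univ.gcd g = 1) (hi0 : ∀ i, g i0 ≤ g i)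
    (hz : z ∈ facs g n) (hz' : z' ∈ facs g n) :
    ((ee g i0 : ℤ)) ∣ ((∑ i, z i : ℕ) : ℤ) - ((∑ i, z' i : ℕ) : ℤ) := by
  have id1 := key_identity hi0 z
  have id2 := key_identity hi0 z'
  have hz1 : ∑ i, z i * g i = n := hz
  have hz2 : ∑ i, z' i * g i = n := hz'
  set E := ee g i0 with hE
  have d1 : E ∣ ∑ i, z i * (g i - g i0) := ee_dvd_sum z
  have d2 : E ∣ ∑ i, z' i * (g i - g i0) := ee_dvd_sum z'
  -- coprimality of g i0 and E
  have hcop : Nat.Coprime (g i0) E := by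
    have : Nat.gcd (g i0) E ∣ Finset.univ.gcd g := by
      apply Finset.dvd_gcd
      intro i _
      have h1 : Nat.gcd (g i0) E ∣ g i0 := Nat.gcd_dvd_left _ _
      have h2 : Nat.gcd (g i0) E ∣ g i - g i0 := (Nat.gcd_dvd_right (g i0) E).trans (ee_dvd_h i)
      have := hi0 i
      have h3 : g i = g i0 + (g i - g i0) := by omega
      rw [h3]
      exact Nat.dvd_add h1 h2
    rw [hgcd] at this
    exact Nat.dvd_one.mp this
  have hEdvd : (E : ℤ) ∣ (g i0 : ℤ) * (((∑ i, z i : ℕ) : ℤ) - ((∑ i, z' i : ℕ) : ℤ)) := by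
    obtain ⟨a, ha⟩ := d1
    obtain ⟨b, hb⟩ := d2
    have : (g i0 : ℤ) * (∑ i, z i : ℕ) + (E * a : ℕ) = (g i0 : ℤ) * (∑ i, z' i : ℕ) + (E * b : ℕ) := by
      push_cast
      have e1 : (n : ℤ) = (g i0 : ℤ) * (∑ i, z i : ℕ) + ((∑ i, z i * (g i - g i0) : ℕ) : ℤ) := by
        rw [← hz1]; exact_mod_cast congrArg (Nat.cast : ℕ → ℤ) id1
      have e2 : (n : ℤ) = (g i0 : ℤ) * (∑ i, z' i : ℕ) + ((∑ i, z' i * (g i - g i0) : ℕ) : ℤ) := by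
        rw [← hz2]; exact_mod_cast congrArg (Nat.cast : ℕ → ℤ) id2
      rw [ha] at e1
      rw [hb] at e2
      push_cast at e1 e2
      linarith
    refine ⟨(b : ℤ) - a, ?_⟩
    push_cast at this ⊢
    linarith
  have hcopz : IsCoprime ((E : ℤ)) ((g i0 : ℤ)) := by
    rw [Int.isCoprime_iff_gcd_eq_one]
    simpa [Int.gcd_natCast_natCast, Nat.gcd_comm] using hcop
  exact (IsCoprime.dvd_of_dvd_mul_left hcopz hEdvd)

end Structure
section Middle

variable {k : ℕ} {g : Fin k → ℕ} {i0 imax : Fin k} {n l : ℕ}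

lemma middle_mem (hi0 : ∀ i, g i0 ≤ g i) (huniq : ∀ i, g i = g i0 → i = i0)
    (himax : ∀ i, g i ≤ g imax) (hHpos : g i0 < g imax) (h0 : 0 < g i0)
    (Fh : ℕ)
    (hFh : ∀ m, ee g i0 ∣ m → Fh ≤ m → ∃ w : Fin k → ℕ, ∑ i, w i * (g i - g i0) = m)
    (hn : mem g n) (t : ℕ)
    (hl : l = lmin g n + t * ee g i0)
    (hl1 : lmin g n + (Fh + (g imax - g i0)) ≤ l)
    (hl2 : l + (Fh + (g imax - g i0)) ≤ lmax g n) :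
    l ∈ lengthSet g n := by
  classical
  have hi0max : i0 ≠ imax := fun hcon => by rw [← hcon] at hHpos; exact lt_irrefl _ hHpos
  set E := ee g i0 with hE
  set H := g imax - g i0 with hH
  have Hpos : 0 < H := by omega
  have hpos' : ∀ i, 0 < g i := fun i => lt_of_lt_of_le h0 (hi0 i)
  obtain ⟨zmin, hzminf, hzminlen0⟩ := lmin_mem hpos' hn
  obtain ⟨zmax, hzmaxf, hzmaxlen0⟩ := lmax_mem hpos' hn
  have hzminlen : ∑ i, zmin i = lmin g n := hzminlen0
  have hzmaxlen : ∑ i, zmax i = lmax g n := hzmaxlen0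
  clear hzminlen0 hzmaxlen0
  set Smin := ∑ i, zmin i * (g i - g i0) with hSmin
  set Smax := ∑ i, zmax i * (g i - g i0) with hSmax
  have idmin : n = g i0 * lmin g n + Smin := by
    rw [← hzminlen, ← (hzminf : ∑ i, zmin i * g i = n), hSmin]
    exact key_identity hi0 zmin
  have idmax : n = g i0 * lmax g n + Smax := by
    rw [← hzmaxlen, ← (hzmaxf : ∑ i, zmax i * g i = n), hSmax]
    exact key_identity hi0 zmax
  have hglmax : g i0 * lmax g n ≤ n := by omega
  have hllmax : l ≤ lmax g n := by omega
  have hgl : g i0 * l ≤ n := le_trans (Nat.mul_le_mul_left _ hllmax) hglmax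
  set m := n - g i0 * l with hm
  have e3 : g i0 * l = g i0 * lmin g n + g i0 * (t * E) := by rw [hl, Nat.mul_add]
  have hm_eq : m + g i0 * (t * E) = Smin := by omega
  have dSmin : E ∣ Smin := ee_dvd_sum zmin
  have dx : E ∣ g i0 * (t * E) := Dvd.dvd.mul_left (Dvd.dvd.mul_left dvd_rfl t) (g i0)
  have hEm : E ∣ m := by
    have h5 : E ∣ m + g i0 * (t * E) := hm_eq ▸ dSmin
    have h6 := Nat.dvd_sub h5 dx
    simpa using h6
  have hmlow : Fh + H ≤ m := by
    have q1 : g i0 * lmax g n = g i0 * l + g i0 * (lmax g n - l) := by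
      rw [← Nat.mul_add]; congr 1; omega
    have p1 : Fh + H ≤ lmax g n - l := by omega
    have p2 : (lmax g n - l) ≤ g i0 * (lmax g n - l) := Nat.le_mul_of_pos_left _ h0
    omega
  have hmhigh : m ≤ H * lmin g n := by
    have hq := sum_h_le (i0 := i0) himax zmin
    rw [hzminlen, ← hSmin, ← hH] at hq
    omega
  set t' := (m - Fh) / H with ht'
  set m0 := m - t' * H with hm0
  have ht'le : t' * H ≤ m - Fh := by
    rw [ht']; exact Nat.div_mul_le_self _ _
  have hdam := Nat.div_add_mod (m - Fh) H
  have hcomm : t' * H = H * ((m - Fh) / H) := by rw [ht', Nat.mul_comm]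
  have hmodlt : (m - Fh) % H < H := Nat.mod_lt _ Hpos
  have hm0ge : Fh ≤ m0 := by omega
  have hm0lt : m0 < Fh + H := by omega
  have hEH : E ∣ H := ee_dvd_h imax
  have hEm0 : E ∣ m0 := Nat.dvd_sub hEm (Dvd.dvd.mul_left hEH t')
  obtain ⟨w0, hw0⟩ := hFh m0 hEm0 hm0ge
  set w0' := Function.update w0 i0 0 with hw0'
  have hw0'sum : ∑ i, w0' i * (g i - g i0) = m0 := by
    rw [← hw0]
    apply Finset.sum_congr rfl
    intro i _
    by_cases hii : i = i0
    · subst hii; simp [hw0', Function.update_self]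
    · simp [hw0', Function.update_of_ne hii]
  set SW0 := ∑ i, w0' i with hSW0
  have hw0'le : SW0 ≤ m0 := by
    rw [hSW0, ← hw0'sum]
    apply Finset.sum_le_sum
    intro i _
    by_cases hii : i = i0
    · subst hii; simp [hw0', Function.update_self]
    · have hgti : g i0 < g i := lt_of_le_of_ne (hi0 i) (fun hh => hii (huniq i hh.symm))
      calc w0' i = w0' i * 1 := by ring
      _ ≤ w0' i * (g i - g i0) := Nat.mul_le_mul_left _ (by omega)
  set w : Fin k → ℕ := fun i => w0' i + (if i = imax then t' else 0) with hwdef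
  have hwsumh : ∑ i, w i * (g i - g i0) = m := by
    have expand : ∀ i ∈ Finset.univ, w i * (g i - g i0)
        = w0' i * (g i - g i0) + (if i = imax then t' * (g i - g i0) else 0) := by
      intro i _
      by_cases hii : i = imax
      · subst hii; simp [hwdef]; ring
      · simp [hwdef, hii]
    rw [Finset.sum_congr rfl expand, Finset.sum_add_distrib, hw0'sum,
      Finset.sum_ite_eq' Finset.univ imax]
    simp only [Finset.mem_univ, if_true]
    rw [← hH]
    omega
  have hwi0 : w i0 = 0 := by
    rw [hwdef]
    simp [hw0', Function.update_self, if_neg hi0max]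
  have ht'lmin : t' ≤ lmin g n := by
    have d1 : t' ≤ m / H := by
      rw [ht']; exact Nat.div_le_div_right (Nat.sub_le _ _)
    have d2 : m / H ≤ (H * lmin g n) / H := Nat.div_le_div_right hmhigh
    rw [Nat.mul_div_cancel_left _ Hpos] at d2
    omega
  set SW := ∑ i, w i with hSW
  have hwsum_eq : SW = SW0 + t' := by
    rw [hSW, hSW0, hwdef, Finset.sum_add_distrib, Finset.sum_ite_eq' Finset.univ imax]
    simp
  have hwlel : SW ≤ l := by omega
  set z := Function.update w i0 (l - SW) with hz
  have hsum_univ_diff : ∑ i ∈ Finset.univ \ {i0}, w i = SW := by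
    rw [hSW]
    apply Finset.sum_subset (Finset.subset_univ _)
    intro x _ hx
    have hxi : x = i0 := by
      by_contra hcon
      exact hx (Finset.mem_sdiff.mpr ⟨Finset.mem_univ _, by simp [hcon]⟩)
    rw [hxi, hwi0]
  have hzsum : ∑ i, z i = l := by
    rw [hz, Finset.sum_update_of_mem (Finset.mem_univ i0), hsum_univ_diff]
    omega
  have hzsumh : ∑ i, z i * (g i - g i0) = m := by
    rw [← hwsumh]
    apply Finset.sum_congr rfl
    intro i _
    by_cases hii : i = i0
    · subst hii; simp [hz, Function.update_self]
    · simp [hz, Function.update_of_ne hii]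
  have hzfacs : z ∈ facs g n := by
    show ∑ i, z i * g i = n
    rw [key_identity hi0 z, hzsum, hzsumh]
    omega
  exact ⟨z, hzfacs, hzsum⟩

end Middle
section Counting

variable {k : ℕ} {g : Fin k → ℕ} {i0 imax : Fin k} {n : ℕ}

lemma sub_lmin_dvd (hgcd : Finset.univ.gcd g = 1) (hi0 : ∀ i, g i0 ≤ g i)
    (hpos : ∀ i, 0 < g i) (hn : mem g n) (hl : l ∈ lengthSet g n) :
    ee g i0 ∣ (l - lmin g n) := by
  obtain ⟨z, hzf, hzl⟩ := hl
  obtain ⟨zmin, hzminf, hzminl⟩ := lmin_mem hpos hn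
  have hd := length_congr (i0 := i0) hgcd hi0 hzf hzminf
  have hll : ∑ i, z i = l := hzl
  have hlm : ∑ i, zmin i = lmin g n := hzminl
  rw [hll, hlm] at hd
  have hge : lmin g n ≤ l := lmin_le hpos ⟨z, hzf, hzl⟩
  have : ((ee g i0 : ℤ)) ∣ ((l - lmin g n : ℕ) : ℤ) := by
    rw [Nat.cast_sub hge]; exact hd
  exact_mod_cast this

lemma ncard_le_span_div (hgcd : Finset.univ.gcd g = 1) (hi0 : ∀ i, g i0 ≤ g i)
    (hpos : ∀ i, 0 < g i) (hEpos : 0 < ee g i0) (hn : mem g n) :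
    (lengthSet g n).ncard ≤ (lmax g n - lmin g n) / ee g i0 + 1 := by
  classical
  set E := ee g i0 with hE
  have hfin := lengthSet_finite hpos n
  rw [Set.ncard_eq_toFinset_card _ hfin]
  have hinj : ∀ l ∈ hfin.toFinset, ∀ l' ∈ hfin.toFinset,
      (l - lmin g n) / E = (l' - lmin g n) / E → l = l' := by
    intro l hl l' hl'
    rw [Set.Finite.mem_toFinset] at hl hl'
    have d1 := sub_lmin_dvd (i0 := i0) hgcd hi0 hpos hn hl
    have d2 := sub_lmin_dvd (i0 := i0) hgcd hi0 hpos hn hl'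
    have g1 : lmin g n ≤ l := lmin_le hpos hl
    have g2 : lmin g n ≤ l' := lmin_le hpos hl'
    intro heq
    have e1 : E * ((l - lmin g n) / E) = l - lmin g n := Nat.mul_div_cancel' d1
    have e2 : E * ((l' - lmin g n) / E) = l' - lmin g n := Nat.mul_div_cancel' d2
    rw [heq] at e1
    omega
  have hmap : ∀ l ∈ hfin.toFinset, (l - lmin g n) / E ∈ Finset.range ((lmax g n - lmin g n) / E + 1) := by
    intro l hl
    rw [Set.Finite.mem_toFinset] at hl
    rw [Finset.mem_range, Nat.lt_succ_iff]
    exact Nat.div_le_div_right (by have := le_lmax hpos hl; omega)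
  calc hfin.toFinset.card ≤ (Finset.range ((lmax g n - lmin g n) / E + 1)).card :=
        Finset.card_le_card_of_injOn _ hmap hinj
  _ = (lmax g n - lmin g n) / E + 1 := Finset.card_range _

lemma span_le_bound (hgcd : Finset.univ.gcd g = 1) (hi0 : ∀ i, g i0 ≤ g i)
    (huniq : ∀ i, g i = g i0 → i = i0)
    (himax : ∀ i, g i ≤ g imax) (hHpos : g i0 < g imax) (h0 : 0 < g i0)
    (hEpos : 0 < ee g i0) (Fh : ℕ)
    (hFh : ∀ m, ee g i0 ∣ m → Fh ≤ m → ∃ w : Fin k → ℕ, ∑ i, w i * (g i - g i0) = m)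
    (hn : mem g n) :
    lmax g n - lmin g n ≤
      ee g i0 * ((lengthSet g n).ncard - 1) + (2 * (Fh + (g imax - g i0)) + 2 * ee g i0) := by
  classical
  set E := ee g i0 with hE
  set C := Fh + (g imax - g i0) with hC
  set span := lmax g n - lmin g n with hspan
  by_cases hsp : span ≤ 2 * C + 2 * E
  · omega
  · push_neg at hsp
    have hpos : ∀ i, 0 < g i := fun i => lt_of_lt_of_le h0 (hi0 i)
    have hfin := lengthSet_finite hpos n
    have hminmax : lmin g n ≤ lmax g n := lmin_le hpos (lmax_mem hpos hn)
    set t1 := C / E + 1 with ht1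
    set t2 := (span - C) / E with ht2
    have hd1 := Nat.div_add_mod C E
    have hd1m : C % E < E := Nat.mod_lt _ hEpos
    have hd2 := Nat.div_add_mod (span - C) E
    have hd2m : (span - C) % E < E := Nat.mod_lt _ hEpos
    have ht1E : t1 * E = E * (C / E) + E := by rw [ht1]; ring
    have ht2E : t2 * E = E * ((span - C) / E) := by rw [ht2]; ring
    -- every t in [t1, t2] gives a length
    have hmem : ∀ t ∈ Finset.Icc t1 t2, lmin g n + t * E ∈ hfin.toFinset := by
      intro t ht
      rw [Finset.mem_Icc] at ht
      rw [Set.Finite.mem_toFinset]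
      have hle1 : t1 * E ≤ t * E := Nat.mul_le_mul_right _ ht.1
      have hle2 : t * E ≤ t2 * E := Nat.mul_le_mul_right _ ht.2
      have hsp2 : span = lmax g n - lmin g n := hspan
      apply middle_mem (imax := imax) hi0 huniq himax hHpos h0 Fh hFh hn t rfl
      · have h1 : C ≤ t * E := by omega
        exact Nat.add_le_add_left h1 _
      · have h2 : (lmin g n + t * E) + C ≤ lmax g n := by omega
        exact h2
    have hinj : ∀ a ∈ Finset.Icc t1 t2, ∀ b ∈ Finset.Icc t1 t2,
        lmin g n + a * E = lmin g n + b * E → a = b := by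
      intro a _ b _ hab
      have : a * E = b * E := by omega
      exact Nat.eq_of_mul_eq_mul_right hEpos this
    have hcard : t2 + 1 - t1 ≤ hfin.toFinset.card := by
      have := Finset.card_le_card_of_injOn _ hmem hinj
      rwa [Nat.card_Icc] at this
    have hncard : (lengthSet g n).ncard = hfin.toFinset.card := Set.ncard_eq_toFinset_card _ hfin
    -- t1 ≤ t2
    have ht1let2 : t1 ≤ t2 := by
      by_contra hcon
      push_neg at hcon
      have : t2 * E ≤ t1 * E := Nat.mul_le_mul_right _ (by omega)
      omega
    have hkey : E * ((lengthSet g n).ncard - 1) ≥ E * (t2 - t1) := by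
      apply Nat.mul_le_mul_left
      omega
    have hsub : E * (t2 - t1) + E * t1 = E * t2 := by
      rw [← Nat.mul_add]
      congr 1
      omega
    have hc1 : E * t1 = t1 * E := Nat.mul_comm _ _
    have hc2 : E * t2 = t2 * E := Nat.mul_comm _ _
    omega

end Counting
section Span

variable {k : ℕ} {g : Fin k → ℕ} {i0 imax : Fin k}

/-- adding t copies of generator j to a factorization -/
lemma add_copies (w : Fin k → ℕ) (j : Fin k) (t : ℕ) :
    (∑ i, (w i + (if i = j then t else 0)) * g i = (∑ i, w i * g i) + t * g j)
    ∧ (∑ i, (w i + (if i = j then t else 0)) = (∑ i, w i) + t) := by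
  classical
  constructor
  · have expand : ∀ i ∈ Finset.univ, (w i + (if i = j then t else 0)) * g i
        = w i * g i + (if i = j then t * g i else 0) := by
      intro i _
      by_cases hij : i = j
      · subst hij; simp; ring
      · simp [hij]
    rw [Finset.sum_congr rfl expand, Finset.sum_add_distrib, Finset.sum_ite_eq' Finset.univ j]
    simp
  · rw [Finset.sum_add_distrib, Finset.sum_ite_eq' Finset.univ j]
    simp

lemma length_le_self (hpos : ∀ i, 0 < g i) (w : Fin k → ℕ) :
    ∑ i, w i ≤ ∑ i, w i * g i := by
  apply Finset.sum_le_sum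
  intro i _
  calc w i = w i * 1 := by ring
  _ ≤ w i * g i := Nat.mul_le_mul_left _ (hpos i)

lemma span_grows (hpos : ∀ i, 0 < g i) (hgcd : Finset.univ.gcd g = 1)
    (hi0 : ∀ i, g i0 ≤ g i) (himax : ∀ i, g i ≤ g imax) (hHpos : g i0 < g imax)
    (S0 : ℕ) :
    ∃ N : ℕ, ∀ n, N ≤ n → mem g n → S0 ≤ lmax g n - lmin g n := by
  classical
  obtain ⟨Ag, hAg⟩ := rep_all g
  set gm := g i0 with hgm
  set gM := g imax with hgM
  have hgm1 : 1 ≤ gm := hpos i0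
  have hgM1 : gm < gM := hHpos
  set P := Ag + gM + S0 with hP
  set X := P * gm + Ag + gm with hX
  refine ⟨X * gM + Ag + gM, ?_⟩
  intro n hN hn
  -- long factorization
  set t := (n - Ag) / gm with ht
  set s := n - t * gm with hs
  have hnAg : Ag ≤ n := by
    have h9 : gM ≤ X * gM := Nat.le_mul_of_pos_left gM (show 0 < X by
      have : 0 < gm := hgm1
      omega)
    omega
  have hdm := Nat.div_add_mod (n - Ag) gm
  have hmlt : (n - Ag) % gm < gm := Nat.mod_lt _ (by omega)
  have hts : t * gm = gm * ((n - Ag) / gm) := by rw [ht, Nat.mul_comm]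
  have hc1 : t * g i0 = t * gm := rfl
  have hsa : Ag ≤ s ∧ s < Ag + gm ∧ n = t * gm + s := by omega
  obtain ⟨ws, hws⟩ := hAg s (by rw [hgcd]; exact one_dvd _) hsa.1
  have hzbig := add_copies (g := g) ws i0 t
  have hbigmem : (fun i => ws i + (if i = i0 then t else 0)) ∈ facs g n := by
    show ∑ i, (ws i + (if i = i0 then t else 0)) * g i = n
    rw [hzbig.1, hws]
    omega
  have hbiglen : t ≤ lmax g n := by
    have hmem : (∑ i, ws i) + t ∈ lengthSet g n := ⟨_, hbigmem, hzbig.2⟩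
    have := le_lmax hpos hmem
    omega
  -- short factorization
  set t' := (n - Ag) / gM with ht'
  set s' := n - t' * gM with hs'
  have hdm' := Nat.div_add_mod (n - Ag) gM
  have hmlt' : (n - Ag) % gM < gM := Nat.mod_lt _ (by omega)
  have hts' : t' * gM = gM * ((n - Ag) / gM) := by rw [ht', Nat.mul_comm]
  have hc2 : t' * g imax = t' * gM := rfl
  have hsa' : Ag ≤ s' ∧ s' < Ag + gM ∧ n = t' * gM + s' := by omega
  obtain ⟨ws', hws'⟩ := hAg s' (by rw [hgcd]; exact one_dvd _) hsa'.1
  have hzsml := add_copies (g := g) ws' imax t'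
  have hsmlmem : (fun i => ws' i + (if i = imax then t' else 0)) ∈ facs g n := by
    show ∑ i, (ws' i + (if i = imax then t' else 0)) * g i = n
    rw [hzsml.1, hws']
    omega
  have hwslen : ∑ i, ws' i ≤ s' := by
    have := length_le_self hpos ws'
    omega
  have hsmllen : lmin g n ≤ t' + s' := by
    have hmem : (∑ i, ws' i) + t' ∈ lengthSet g n := ⟨_, hsmlmem, hzsml.2⟩
    have := lmin_le hpos hmem
    omega
  -- t' is large
  have ht'X : X ≤ t' := by
    by_contra hcon
    push_neg at hcon
    have h1 : t' + 1 ≤ X := hcon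
    have h2 : (t' + 1) * gM ≤ X * gM := Nat.mul_le_mul_right _ h1
    have h3 : (t' + 1) * gM = t' * gM + gM := by ring
    omega
  -- t ≥ t' + P
  have htt' : t' + P ≤ t := by
    have f1 : t * gm + s = t' * gM + s' := by omega
    have f2 : t' ≤ t' * (gM - gm) := Nat.le_mul_of_pos_right t' (by omega)
    have f3 : t' * gM = t' * gm + t' * (gM - gm) := by
      rw [← Nat.mul_add]
      congr 1
      omega
    have f4 : X * gm ≤ t' * gm := Nat.mul_le_mul_right _ ht'X
    have f5 : X * gm = P * gm * gm + Ag * gm + gm * gm := by rw [hX]; ring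
    have f6 : P ≤ P * gm := Nat.le_mul_of_pos_right P (by omega)
    have f7 : P * gm ≤ P * gm * gm := Nat.le_mul_of_pos_right (P * gm) (by omega)
    have f8a : Ag ≤ Ag * gm := Nat.le_mul_of_pos_right Ag (by omega)
    have f8b : gm ≤ gm * gm := Nat.le_mul_of_pos_right gm (by omega)
    -- conclude t * gm ≥ (t' + P) * gm
    have f9 : (t' + P) * gm ≤ t * gm := by
      have e1 : (t' + P) * gm = t' * gm + P * gm := by ring
      omega
    exact Nat.le_of_mul_le_mul_right f9 (by omega)
  omega

end Span
section Assembly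

variable {k : ℕ} {g : Fin k → ℕ}

lemma two_le_ncard_facts (hpos : ∀ i, 0 < g i) {n : ℕ}
    (h2 : 2 ≤ (lengthSet g n).ncard) :
    mem g n ∧ lmin g n < lmax g n := by
  classical
  have hfin := lengthSet_finite hpos n
  have hne : (lengthSet g n).Nonempty := by
    apply Set.nonempty_of_ncard_ne_zero
    omega
  obtain ⟨l, hl⟩ := hne
  obtain ⟨z, hzf, -⟩ := hl
  have hmem : mem g n := ⟨z, hzf⟩
  clear hzf
  refine ⟨hmem, ?_⟩
  have hcard : 1 < hfin.toFinset.card := by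
    rw [← Set.ncard_eq_toFinset_card _ hfin]
    omega
  obtain ⟨a, ha, b, hb, hab⟩ := Finset.one_lt_card.mp hcard
  rw [Set.Finite.mem_toFinset] at ha hb
  have h1 : lmin g n ≤ a := lmin_le hpos ha
  have h2' : a ≤ lmax g n := le_lmax hpos ha
  have h3 : lmin g n ≤ b := lmin_le hpos hb
  have h4 : b ≤ lmax g n := le_lmax hpos hb
  omega

theorem stmt3' (k : ℕ) (g : Fin k → ℕ) (hpos : ∀ i, 0 < g i)
    (hgcd : Finset.univ.gcd g = 1) (hmin : IsMinGen g)
    (hne : (Delta g).Nonempty) :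
    ∃ n : ℕ, 2 ≤ (lengthSet g n).ncard ∧ LD g n = LDsgp g := by
  classical
  -- extract an element with two lengths
  obtain ⟨d, hd⟩ := hne
  rw [Delta, Set.mem_iUnion] at hd
  obtain ⟨n0, a, ha, b, hb, hab, -, -⟩ := hd
  -- k ≥ 1 and g nonconstant
  have hk0 : k ≠ 0 := by
    rintro rfl
    obtain ⟨z, hz, hza⟩ := ha
    obtain ⟨z', hz', hzb⟩ := hb
    have : z = z' := Subsingleton.elim _ _
    rw [this, hzb] at hza
    omega
  have : NeZero k := ⟨hk0⟩
  have huniv : (Finset.univ : Finset (Fin k)).Nonempty := Finset.univ_nonempty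
  obtain ⟨i0, -, hi0⟩ := Finset.exists_min_image Finset.univ g huniv
  obtain ⟨imax, -, himax⟩ := Finset.exists_max_image Finset.univ g huniv
  have hi0' : ∀ i, g i0 ≤ g i := fun i => hi0 i (Finset.mem_univ i)
  have himax' : ∀ i, g i ≤ g imax := fun i => himax i (Finset.mem_univ i)
  -- injectivity from minimality
  have ginj : Function.Injective g := by
    intro i j hij
    by_contra hne'
    apply hmin i
    refine ⟨fun l => if l = j then 1 else 0, by simp [hne'], ?_⟩
    have : ∀ l ∈ Finset.univ, (if l = j then 1 else 0) * g l = (if l = j then g j else 0) := by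
      intro l _
      by_cases hlj : l = j <;> simp [hlj]
    rw [Finset.sum_congr rfl this, Finset.sum_ite_eq' Finset.univ j]
    simp [hij]
  -- nonconstant
  have hHpos : g i0 < g imax := by
    rcases lt_or_eq_of_le (hi0' imax) with h | h
    · exact h
    · exfalso
      -- g constant: all lengths equal
      obtain ⟨z, hz, hza0⟩ := ha
      obtain ⟨z', hz', hzb0⟩ := hb
      have hza : ∑ i, z i = a := hza0
      have hzb : ∑ i, z' i = b := hzb0
      have hconst : ∀ i, g i = g i0 := fun i => le_antisymm (h ▸ himax' i) (hi0' i)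
      have hs : ∀ w : Fin k → ℕ, ∑ i, w i * g i = g i0 * ∑ i, w i := by
        intro w
        rw [Finset.mul_sum]
        exact Finset.sum_congr rfl fun i _ => by rw [hconst i]; ring
      have e1 : g i0 * ∑ i, z i = n0 := by rw [← hs]; exact hz
      have e2 : g i0 * ∑ i, z' i = n0 := by rw [← hs]; exact hz'
      have hg0 : 0 < g i0 := hpos i0
      have heq : ∑ i, z i = ∑ i, z' i := by
        have := e1.trans e2.symm
        exact Nat.eq_of_mul_eq_mul_left hg0 this
      rw [hza, hzb] at heq
      exact absurd heq (ne_of_lt hab)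
  have huniq : ∀ i, g i = g i0 → i = i0 := fun i hh => ginj hh
  -- e positive
  have hEpos : 0 < ee g i0 := by
    rcases Nat.eq_zero_or_pos (ee g i0) with h | h
    · exfalso
      have := Finset.gcd_eq_zero_iff.mp h imax (Finset.mem_univ _)
      omega
    · exact h
  set E := ee g i0 with hE
  -- representation bound for the differences
  obtain ⟨Fh, hFh0⟩ := rep_all (fun i => g i - g i0)
  have hFh : ∀ m, ee g i0 ∣ m → Fh ≤ m → ∃ w : Fin k → ℕ, ∑ i, w i * (g i - g i0) = m := by
    intro m h1 h2
    exact hFh0 m h1 h2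
  set K : ℕ := 2 * (Fh + (g imax - g i0)) + 2 * E with hK
  -- the target set
  set V : Set ℝ := {x : ℝ | ∃ n : ℕ, 2 ≤ (lengthSet g n).ncard ∧ x = LD g n} with hV
  have hLDsgp : LDsgp g = sInf V := rfl
  -- basic facts about LD for an n with two lengths
  have hLDform : ∀ n : ℕ, 2 ≤ (lengthSet g n).ncard →
      LD g n = (((lengthSet g n).ncard : ℝ) - 1) / ((lmax g n : ℝ) - (lmin g n : ℝ)) := by
    intro n _
    rfl
  have hspanpos : ∀ n : ℕ, 2 ≤ (lengthSet g n).ncard → 0 < lmax g n - lmin g n := by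
    intro n h2
    have := (two_le_ncard_facts hpos h2).2
    omega
  have hLD_le : ∀ n : ℕ, 2 ≤ (lengthSet g n).ncard → LD g n ≤ 1 / (E : ℝ) := by
    intro n h2
    obtain ⟨hmem, hlt⟩ := two_le_ncard_facts hpos h2
    have hub := ncard_le_span_div (i0 := i0) hgcd hi0' hpos hEpos hmem
    rw [← hE] at hub
    set c := (lengthSet g n).ncard with hc
    set span := lmax g n - lmin g n with hspan
    have hnat : E * (c - 1) ≤ span := by
      have h3 : E * (span / E) ≤ span := Nat.mul_div_le _ _
      have h4 : E * (c - 1) ≤ E * (span / E) := Nat.mul_le_mul_left _ (by omega)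
      omega
    rw [hLDform n h2]
    have hcastspan : (lmax g n : ℝ) - (lmin g n : ℝ) = (span : ℝ) := by
      rw [hspan, Nat.cast_sub (by omega)]
    rw [hcastspan]
    have hsp : (0:ℝ) < (span:ℝ) := by
      have := hspanpos n h2
      exact_mod_cast this
    have hEr : (0:ℝ) < (E:ℝ) := by exact_mod_cast hEpos
    rw [div_le_div_iff₀ hsp hEr]
    have : ((c:ℝ) - 1) * E = ((E * (c-1) : ℕ) : ℝ) := by
      push_cast [Nat.cast_sub (show 1 ≤ c by omega)]
      ring
    rw [this]
    have : ((E * (c-1) : ℕ) : ℝ) ≤ (span : ℝ) := by exact_mod_cast hnat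
    linarith
  have hLD_lower : ∀ n : ℕ, 2 ≤ (lengthSet g n).ncard →
      ((lmax g n - lmin g n : ℕ) : ℝ) ≤ E * (((lengthSet g n).ncard : ℝ) - 1) + K := by
    intro n h2
    obtain ⟨hmem, hlt⟩ := two_le_ncard_facts hpos h2
    have hlb := span_le_bound (i0 := i0) (imax := imax) hgcd hi0' huniq himax' hHpos
      (hpos i0) hEpos Fh hFh hmem
    set c := (lengthSet g n).ncard with hc
    have : ((lmax g n - lmin g n : ℕ) : ℝ) ≤ ((E * (c - 1) + K : ℕ) : ℝ) := by
      exact_mod_cast hlb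
    calc ((lmax g n - lmin g n : ℕ) : ℝ) ≤ ((E * (c - 1) + K : ℕ) : ℝ) := this
    _ = E * (((c:ℕ):ℝ) - 1) + K := by
        push_cast [Nat.cast_sub (show 1 ≤ c by omega)]
        ring
  -- V is nonempty
  have hn0card : 2 ≤ (lengthSet g n0).ncard := by
    have hfin := lengthSet_finite hpos n0
    have : 1 < hfin.toFinset.card := by
      apply Finset.one_lt_card.mpr
      refine ⟨a, ?_, b, ?_, by omega⟩ <;> rw [Set.Finite.mem_toFinset] <;> assumption
    rw [Set.ncard_eq_toFinset_card _ hfin]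
    omega
  have hVne : V.Nonempty := ⟨LD g n0, n0, hn0card, rfl⟩
  have hVbdd : BddBelow V := by
    refine ⟨0, ?_⟩
    rintro x ⟨n, h2, rfl⟩
    obtain ⟨hmem, hlt⟩ := two_le_ncard_facts hpos h2
    rw [hLDform n h2]
    apply div_nonneg
    · have : (2:ℝ) ≤ ((lengthSet g n).ncard : ℝ) := by exact_mod_cast h2
      linarith
    · have h1 : (lmin g n : ℝ) ≤ (lmax g n : ℝ) := by exact_mod_cast le_of_lt hlt
      linarith
  by_cases hall : ∀ x ∈ V, 1 / (E:ℝ) ≤ x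
  · -- all values equal 1/E
    have hv0 : LD g n0 = 1 / (E:ℝ) :=
      le_antisymm (hLD_le n0 hn0card) (hall _ ⟨n0, hn0card, rfl⟩)
    have : sInf V = 1 / (E:ℝ) := by
      apply IsLeast.csInf_eq
      exact ⟨hv0 ▸ ⟨n0, hn0card, rfl⟩, fun x hx => hall x hx⟩
    exact ⟨n0, hn0card, by rw [hLDsgp, this, hv0]⟩
  · push_neg at hall
    obtain ⟨v1, hv1V, hv1lt⟩ := hall
    obtain ⟨n1, hn1card, hv1eq⟩ := hv1V
    set δ : ℝ := 1 / (E:ℝ) - LD g n1 with hδ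
    have hδpos : 0 < δ := by
      rw [hv1eq] at hv1lt
      rw [hδ]
      linarith
    have hEr : (0:ℝ) < (E:ℝ) := by exact_mod_cast hEpos
    set S0 : ℕ := ⌈(K:ℝ) / ((E:ℝ) * δ)⌉₊ + 1 with hS0
    obtain ⟨N, hN⟩ := span_grows (i0 := i0) (imax := imax) hpos hgcd hi0' himax' hHpos S0
    set W : Set ℕ := {n | 2 ≤ (lengthSet g n).ncard ∧ LD g n ≤ LD g n1} with hW
    -- W is bounded
    have hWbound : ∀ n ∈ W, n < N := by
      rintro n ⟨h2, hle⟩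
      by_contra hcon
      push_neg at hcon
      obtain ⟨hmem, hlt⟩ := two_le_ncard_facts hpos h2
      have hsp := hN n hcon hmem
      set c := (lengthSet g n).ncard with hc
      set span := lmax g n - lmin g n with hspan
      have hsppos : 0 < span := hspanpos n h2
      have hspr : (0:ℝ) < (span:ℝ) := by exact_mod_cast hsppos
      have hLDn : LD g n = ((c:ℝ) - 1) / (span:ℝ) := by
        rw [hLDform n h2, hspan, Nat.cast_sub (by omega)]
      have hlow := hLD_lower n h2
      rw [← hspan, ← hc] at hlow
      -- span - K ≤ E * span * LD n
      have key1 : (span:ℝ) - K ≤ (E:ℝ) * (span:ℝ) * LD g n := by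
        rw [hLDn]
        have hident : (E:ℝ) * (span:ℝ) * (((c:ℝ) - 1) / (span:ℝ)) = (E:ℝ) * ((c:ℝ) - 1) := by
          field_simp
        rw [hident]
        linarith
      have key2 : (E:ℝ) * (span:ℝ) * LD g n ≤ (span:ℝ) - δ * (E:ℝ) * (span:ℝ) := by
        have h5 : LD g n ≤ 1/(E:ℝ) - δ := by
          rw [hδ]; linarith
        have h6 : (E:ℝ) * (span:ℝ) * LD g n ≤ (E:ℝ) * (span:ℝ) * (1/(E:ℝ) - δ) := by
          apply mul_le_mul_of_nonneg_left h5
          positivity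
        calc (E:ℝ) * (span:ℝ) * LD g n ≤ (E:ℝ) * (span:ℝ) * (1/(E:ℝ) - δ) := h6
        _ = (span:ℝ) - δ * (E:ℝ) * (span:ℝ) := by
            field_simp
      have key3 : δ * (E:ℝ) * (span:ℝ) ≤ K := by linarith
      have key4 : (span:ℝ) ≤ (K:ℝ) / ((E:ℝ) * δ) := by
        rw [le_div_iff₀ (by positivity)]
        linarith
      have key5 : (span:ℝ) ≤ (⌈(K:ℝ) / ((E:ℝ) * δ)⌉₊ : ℝ) :=
        key4.trans (Nat.le_ceil _)
      have key6 : span ≤ ⌈(K:ℝ) / ((E:ℝ) * δ)⌉₊ := by exact_mod_cast key5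
      omega
    have hWfin : W.Finite := Set.Finite.subset (Set.finite_Iio N) hWbound
    have hWne : W.Nonempty := ⟨n1, hn1card, le_refl _⟩
    set I : Set ℝ := LD g '' W with hI
    have hIfin : I.Finite := hWfin.image _
    have hIne : I.Nonempty := hWne.image _
    have hβmem : sInf I ∈ I := Set.Nonempty.csInf_mem hIne hIfin
    obtain ⟨nstar, hnstarW, hnstarLD⟩ := hβmem
    have hβV : LD g nstar ∈ V := ⟨nstar, hnstarW.1, rfl⟩
    have hIbdd : BddBelow I := hIfin.bddBelow
    have hβle : ∀ x ∈ V, sInf I ≤ x := by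
      rintro x ⟨n, h2, rfl⟩
      by_cases hc : LD g n ≤ LD g n1
      · exact csInf_le hIbdd ⟨n, ⟨h2, hc⟩, rfl⟩
      · push_neg at hc
        have h7 : sInf I ≤ LD g n1 := csInf_le hIbdd ⟨n1, ⟨hn1card, le_refl _⟩, rfl⟩
        linarith
    have hfinal : sInf V = LD g nstar := by
      apply le_antisymm
      · exact csInf_le hVbdd hβV
      · rw [hnstarLD]
        exact le_csInf hVne hβle
    exact ⟨nstar, hnstarW.1, by rw [hLDsgp, hfinal]⟩

end Assembly

theorem stmt3 (k : ℕ) (g : Fin k → ℕ) (hpos : ∀ i, 0 < g i)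
    (hgcd : Finset.univ.gcd g = 1) (hmin : IsMinGen g)
    (hne : (Delta g).Nonempty) :
    ∃ n : ℕ, 2 ≤ (lengthSet g n).ncard ∧ LD g n = LDsgp g :=
  stmt3' k g hpos hgcd hmin hne
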